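/- arXiv:1705.06222 — 3 statements merged into one kernel-verified Lean document; each statement's English description precedes it below -/
import Mathlib

section
/- Let φ: [0,∞) → [0,∞) be nonnegative, concave, nondecreasing, subadditive with φ(0)=0 and φ(t)/log t → ∞, and set a = lim_{t→∞} φ(t)/t (which exists in [0,∞)). If the differentiation operator D on the weighted Bergman space B_w^∞ satisfies ‖D^n‖ ≤ n! r^{-n} e^{φ(r)} for all r > 0 and n ∈ ℕ, then the spectral radius of D is at most a; in particular if a = 0 then D is quasinilpotent, i.e., lim_{n→∞} ‖D^n‖^{1/n} = 0. -/
/-!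
By Gelfand's formula it suffices to show `‖D ^ n‖ ≤ b ^ n` for large `n` whenever `b > max a 0`.
Taking the radius `r = n / b` in the hypothesis gives `‖D ^ n‖ ≤ n! (b / n) ^ n e^{φ (n / b)}`.
For large `n` we have `φ (n / b) ≤ c n / b` with `a < c < b`, and Stirling's bound
`n! ≤ e √n (n / e) ^ n` then leaves `‖D ^ n‖ ≤ b ^ n · e √n e^{-(1 - c / b) n} ≤ b ^ n`.
-/

open Filter Topology Real Asymptotics

theorem Nat.factorial_le_exp_one_mul_sqrt_mul_pow {n : ℕ} (hn : n ≠ 0) :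
    (n.factorial : ℝ) ≤ exp 1 * √n * (n / exp 1) ^ n := by
  have hseq : Stirling.stirlingSeq n ≤ exp 1 / √2 := by
    obtain ⟨m, rfl⟩ := Nat.exists_eq_succ_of_ne_zero hn
    rw [← Stirling.stirlingSeq_one]
    exact Stirling.stirlingSeq'_antitone (Nat.zero_le m)
  have hfac : (n.factorial : ℝ) = Stirling.stirlingSeq n * (√(2 * n) * (n / exp 1) ^ n) := by
    rw [Stirling.stirlingSeq]
    field_simp
  calc (n.factorial : ℝ) ≤ exp 1 / √2 * (√(2 * n) * (n / exp 1) ^ n) := by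
        rw [hfac]; gcongr
    _ = exp 1 * √n * (n / exp 1) ^ n := by
        rw [Real.sqrt_mul zero_le_two]
        field_simp

theorem eventually_one_add_log_le_mul {ε : ℝ} (hε : 0 < ε) :
    ∀ᶠ n : ℕ in atTop, 1 + log n ≤ ε * n := by
  have hlittle : (fun x => 1 + log x) =o[atTop] id :=
    (isLittleO_const_id_atTop 1).add isLittleO_log_id_atTop
  filter_upwards [tendsto_natCast_atTop_atTop.eventually (hlittle.bound hε)] with n hn
  simpa using (le_abs_self _).trans hn

theorem eventually_factorial_mul_exp_le_pow {c : ℝ} (hc : c < 1) :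
    ∀ᶠ n : ℕ in atTop, (n.factorial : ℝ) * exp (c * n) ≤ (n : ℝ) ^ n := by
  filter_upwards [eventually_one_add_log_le_mul (sub_pos.2 hc), eventually_ne_atTop 0]
    with n hlog hn
  have hn' : (0 : ℝ) < n := by positivity
  calc (n.factorial : ℝ) * exp (c * n) ≤ exp 1 * √n * (n / exp 1) ^ n * exp (c * n) := by
        gcongr; exact Nat.factorial_le_exp_one_mul_sqrt_mul_pow hn
    _ = (n : ℝ) ^ n * exp (1 + log √n - (1 - c) * n) := by
        rw [exp_sub, exp_add, exp_log (by positivity), div_pow, ← exp_nat_mul]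
        rw [show (1 - c) * n = n * 1 - c * n by ring, exp_sub]
        field_simp
    _ ≤ (n : ℝ) ^ n := by
        refine mul_le_of_le_one_right (by positivity) (exp_le_one_iff.2 ?_)
        have : 0 ≤ log n := log_natCast_nonneg n
        rw [log_sqrt hn'.le]
        linarith

theorem eventually_le_mul_of_tendsto_div {φ : ℝ → ℝ} {a c : ℝ}
    (hφ : Tendsto (fun t => φ t / t) atTop (𝓝 a)) (hac : a < c) :
    ∀ᶠ t in atTop, φ t ≤ c * t := by
  filter_upwards [hφ.eventually_lt_const hac, eventually_gt_atTop 0] with t hlt ht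
  exact ((div_lt_iff₀ ht).1 hlt).le

theorem eventually_factorial_mul_inv_pow_mul_exp_le_pow {φ : ℝ → ℝ} {a b : ℝ}
    (hφ : Tendsto (fun t => φ t / t) atTop (𝓝 a)) (hb : 0 < b) (hab : a < b) :
    ∀ᶠ n : ℕ in atTop, (n.factorial : ℝ) * (n / b)⁻¹ ^ n * exp (φ (n / b)) ≤ b ^ n := by
  obtain ⟨c, hac, hcb⟩ := exists_between hab
  have hφc : ∀ᶠ n : ℕ in atTop, φ (n / b) ≤ c * (n / b) :=
    (tendsto_natCast_atTop_atTop.atTop_div_const hb).eventually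
      (eventually_le_mul_of_tendsto_div hφ hac)
  replace hcb : c / b < 1 := (div_lt_one hb).2 hcb
  filter_upwards [hφc, eventually_factorial_mul_exp_le_pow hcb, eventually_ne_atTop 0]
    with n hφn hfac hn
  calc (n.factorial : ℝ) * (n / b)⁻¹ ^ n * exp (φ (n / b))
      ≤ (n.factorial : ℝ) * (n / b)⁻¹ ^ n * exp (c / b * n) := by
        gcongr
        exact hφn.trans_eq (by ring)
    _ = (n.factorial * exp (c / b * n)) * (b ^ n / (n : ℝ) ^ n) := by
        rw [inv_div, div_pow]; ring
    _ ≤ (n : ℝ) ^ n * (b ^ n / (n : ℝ) ^ n) := by gcongr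
    _ = b ^ n := by field_simp

section BanachAlgebra

variable {A : Type*} [NormedRing A] [NormedAlgebra ℂ A] [CompleteSpace A]

theorem spectralRadius_le_of_eventually_norm_pow_le (x : A) {b : ℝ} (hb : 0 ≤ b)
    (h : ∀ᶠ n in atTop, ‖x ^ n‖ ≤ b ^ n) : spectralRadius ℂ x ≤ ENNReal.ofReal b := by
  refine le_of_tendsto (spectrum.pow_norm_pow_one_div_tendsto_nhds_spectralRadius x) ?_
  filter_upwards [h, eventually_ne_atTop 0] with n hn hn0
  refine ENNReal.ofReal_le_ofReal ?_
  calc ‖x ^ n‖ ^ (1 / n : ℝ) ≤ (b ^ n) ^ (1 / n : ℝ) := by gcongr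
    _ = b := by rw [one_div, pow_rpow_inv_natCast hb hn0]

theorem tendsto_norm_pow_one_div_of_spectralRadius_eq_zero {x : A}
    (hx : spectralRadius ℂ x = 0) :
    Tendsto (fun n : ℕ => ‖x ^ n‖ ^ (1 / n : ℝ)) atTop (𝓝 0) := by
  have hgelfand := spectrum.pow_norm_pow_one_div_tendsto_nhds_spectralRadius x
  rw [hx] at hgelfand
  simpa [Function.comp_def, ENNReal.toReal_ofReal, Real.rpow_nonneg]
    using (ENNReal.tendsto_toReal ENNReal.zero_ne_top).comp hgelfand

end BanachAlgebra

theorem stmt_1_general {A : Type*} [NormedRing A] [NormedAlgebra ℂ A] [CompleteSpace A]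
    (φ : ℝ → ℝ)
    (a : ℝ)
    (ha : Tendsto (fun t => φ t / t) atTop (nhds a))
    (D : A)
    (hD : ∀ r : ℝ, 0 < r → ∀ n : ℕ,
      ‖D ^ n‖ ≤ (n.factorial : ℝ) * r⁻¹ ^ n * Real.exp (φ r)) :
    spectralRadius ℂ D ≤ ENNReal.ofReal a ∧
      (a = 0 → Tendsto (fun n : ℕ => ‖D ^ n‖ ^ (1 / (n : ℝ))) atTop (nhds 0)) := by
  have hρ : ∀ b ∈ Set.Ioi (max a 0), spectralRadius ℂ D ≤ ENNReal.ofReal b := fun b hb => by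
    have hb0 : 0 < b := (le_max_right a 0).trans_lt hb
    refine spectralRadius_le_of_eventually_norm_pow_le D hb0.le ?_
    filter_upwards [eventually_factorial_mul_inv_pow_mul_exp_le_pow ha hb0
      ((le_max_left a 0).trans_lt hb), eventually_ne_atTop 0] with n hn hn0
    exact (hD _ (by positivity) n).trans hn
  have hspec : spectralRadius ℂ D ≤ ENNReal.ofReal a := by
    simpa using ge_of_tendsto
      ((ENNReal.continuous_ofReal.tendsto (max a 0)).mono_left nhdsWithin_le_nhds)
      (eventually_nhdsWithin_of_forall hρ)
  refine ⟨hspec, fun ha_eq => tendsto_norm_pow_one_div_of_spectralRadius_eq_zero ?_⟩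
  exact le_antisymm (by simpa [ha_eq] using hspec) bot_le

/-- if the differentiation operator `D` on `B_w^∞` satisfies the bounds
`‖D^n‖ ≤ n! r^{-n} e^{φ(r)}`, then its spectral radius is at most `a = lim φ(t)/t`;
in particular, if `a = 0` then `D` is quasinilpotent.  Here `D` is an element of the
Banach algebra of bounded operators on the Banach space `B_w^∞`. -/
theorem stmt_1 {A : Type*} [NormedRing A] [NormedAlgebra ℂ A] [CompleteSpace A]
    (φ : ℝ → ℝ)
    (hφ0 : ∀ t, 0 ≤ t → 0 ≤ φ t)
    (hconc : ConcaveOn ℝ (Set.Ici 0) φ)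
    (hmono : MonotoneOn φ (Set.Ici 0))
    (hsub : ∀ s t : ℝ, 0 ≤ s → 0 ≤ t → φ (s + t) ≤ φ s + φ t)
    (hzero : φ 0 = 0)
    (hlog : Tendsto (fun t => φ t / Real.log t) atTop atTop)
    (a : ℝ) (ha0 : 0 ≤ a)
    (ha : Tendsto (fun t => φ t / t) atTop (nhds a))
    (D : A)
    (hD : ∀ r : ℝ, 0 < r → ∀ n : ℕ,
      ‖D ^ n‖ ≤ (n.factorial : ℝ) * r⁻¹ ^ n * Real.exp (φ r)) :
    spectralRadius ℂ D ≤ ENNReal.ofReal a ∧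
      (a = 0 → Tendsto (fun n : ℕ => ‖D ^ n‖ ^ (1 / (n : ℝ))) atTop (nhds 0)) :=
  stmt_1_general φ a ha D hD
end

section
/- For every λ ∈ ℂ with |λ| < a, where a = lim_{t→∞} φ(t)/t, the exponential function e_λ(z) = e^{λz} belongs to the weighted Bergman space B_w^p (for 1 ≤ p < ∞), and is an eigenvector of the differentiation operator D with eigenvalue λ. -/
/-!
Pick `b` with `‖λ‖ < b < a`. Since `φ(t)/t → a`, `φ(t) ≥ b t - C` for all `t ≥ 0`, so
`|e^{λz}|^p e^{-pφ(|z|)} ≤ e^{pC} e^{-p(b - ‖λ‖)|z|}`, and an exponentially decaying radial function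
is integrable on `ℂ`.
-/

open Filter MeasureTheory Module Set

theorem integrable_exp_neg_mul_norm {E : Type*} [NormedAddCommGroup E] [NormedSpace ℝ E]
    [FiniteDimensional ℝ E] [Nontrivial E] [MeasurableSpace E] [BorelSpace E]
    (μ : Measure E) [μ.IsAddHaarMeasure] {c : ℝ} (hc : 0 < c) :
    Integrable (fun x : E => Real.exp (-c * ‖x‖)) μ := by
  rw [integrable_fun_norm_addHaar μ (f := fun t => Real.exp (-c * t))]
  have hdim : -1 < ((finrank ℝ E - 1 : ℕ) : ℝ) := neg_one_lt_zero.trans_le (Nat.cast_nonneg _)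
  refine (integrableOn_rpow_mul_exp_neg_mul_rpow hdim one_pos hc).congr_fun
    (fun t _ => ?_) measurableSet_Ioi
  simp [Real.rpow_natCast]

theorem MonotoneOn.measurable_comp_norm {E : Type*} [SeminormedAddCommGroup E]
    [MeasurableSpace E] [OpensMeasurableSpace E] {φ : ℝ → ℝ} (hφ : MonotoneOn φ (Ici 0)) :
    Measurable fun x : E => φ ‖x‖ := by
  have hmono : Monotone fun t => φ (max t 0) := fun s t hst =>
    hφ (mem_Ici.mpr (le_max_right _ _)) (mem_Ici.mpr (le_max_right _ _)) (max_le_max hst le_rfl)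
  simpa [Function.comp_def, max_eq_left (norm_nonneg _)] using
    hmono.measurable.comp (continuous_norm (E := E)).measurable

theorem exists_sub_le_of_tendsto_div_self {φ : ℝ → ℝ} (hφ0 : ∀ t, 0 ≤ t → 0 ≤ φ t) {a b : ℝ}
    (ha : Tendsto (fun t => φ t / t) atTop (nhds a)) (hb : b < a) :
    ∃ C, ∀ t, 0 ≤ t → b * t - C ≤ φ t := by
  obtain ⟨R, hR⟩ := eventually_atTop.mp (ha.eventually (eventually_gt_nhds hb))
  refine ⟨|b| * max R 1, fun t ht => ?_⟩
  rcases le_or_gt (max R 1) t with hRt | htR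
  · have htpos : 0 < t := lt_of_lt_of_le one_pos (le_trans (le_max_right _ _) hRt)
    have := (lt_div_iff₀ htpos).mp (hR t (le_trans (le_max_left _ _) hRt))
    nlinarith [abs_nonneg b, le_max_right R 1]
  · nlinarith [mul_le_mul_of_nonneg_right (le_abs_self b) ht,
      mul_le_mul_of_nonneg_left htR.le (abs_nonneg b), hφ0 t ht]

theorem norm_cexp_mul_rpow_mul_exp_le {φ : ℝ → ℝ} {b C p : ℝ} (hp : 0 ≤ p)
    (hφ : ∀ t, 0 ≤ t → b * t - C ≤ φ t) (lam z : ℂ) :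
    ‖Complex.exp (lam * z)‖ ^ p * Real.exp (-p * φ ‖z‖) ≤
      Real.exp (p * C) * Real.exp (-(p * (b - ‖lam‖)) * ‖z‖) := by
  have hre : (lam * z).re ≤ ‖lam‖ * ‖z‖ := (Complex.re_le_norm _).trans (norm_mul _ _).le
  have hexponent : (lam * z).re * p + -p * φ ‖z‖ ≤ p * C + -(p * (b - ‖lam‖)) * ‖z‖ := by
    linarith [mul_le_mul_of_nonneg_left hre hp,
      mul_le_mul_of_nonneg_left (hφ ‖z‖ (norm_nonneg z)) hp]
  rw [Complex.norm_exp, ← Real.exp_mul, ← Real.exp_add, ← Real.exp_add]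
  exact Real.exp_le_exp.mpr hexponent

theorem stmt_2_general
    (φ : ℝ → ℝ)
    (hφ0 : ∀ t, 0 ≤ t → 0 ≤ φ t)
    (hmono : MonotoneOn φ (Set.Ici 0))
    (a : ℝ) (ha : Tendsto (fun t => φ t / t) atTop (nhds a))
    (p : ℝ) (hp : 1 ≤ p)
    (lam : ℂ) (hlam : ‖lam‖ < a) :
    Integrable (fun z : ℂ =>
        ‖Complex.exp (lam * z)‖ ^ p * Real.exp (-p * φ ‖z‖)) ∧
      ∀ z : ℂ, deriv (fun w : ℂ => Complex.exp (lam * w)) z = lam * Complex.exp (lam * z) := by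
  refine ⟨?_, fun z => ?_⟩
  · obtain ⟨b, hlamb, hba⟩ := exists_between hlam
    obtain ⟨C, hC⟩ := exists_sub_le_of_tendsto_div_self hφ0 ha hba
    have hdecay : 0 < p * (b - ‖lam‖) := mul_pos (by linarith) (by linarith)
    have hmeas : Measurable fun z : ℂ => ‖Complex.exp (lam * z)‖ ^ p * Real.exp (-p * φ ‖z‖) :=
      (by fun_prop : Measurable fun z : ℂ => ‖Complex.exp (lam * z)‖ ^ p).mul
        (Real.measurable_exp.comp (measurable_const.mul hmono.measurable_comp_norm))
    refine ((integrable_exp_neg_mul_norm volume hdecay).const_mul (Real.exp (p * C))).mono'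
      hmeas.aestronglyMeasurable (ae_of_all _ fun z => ?_)
    rw [Real.norm_of_nonneg (by positivity)]
    exact norm_cexp_mul_rpow_mul_exp_le (by linarith) hC lam z
  · rw [(((hasDerivAt_id' z).const_mul lam).cexp).deriv]
    simp [mul_comm]

/-- for `|λ| < a = lim φ(t)/t`, the exponential `e_λ(z) = e^{λz}` belongs to
the weighted Bergman space `B_w^p` (its `p`-th power against the weight is integrable),
and it is an eigenvector of differentiation with eigenvalue `λ`. -/
theorem stmt_2
    (φ : ℝ → ℝ)
    (hφ0 : ∀ t, 0 ≤ t → 0 ≤ φ t)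
    (hconc : ConcaveOn ℝ (Set.Ici 0) φ)
    (hmono : MonotoneOn φ (Set.Ici 0))
    (hsub : ∀ s t : ℝ, 0 ≤ s → 0 ≤ t → φ (s + t) ≤ φ s + φ t)
    (hzero : φ 0 = 0)
    (hlog : Tendsto (fun t => φ t / Real.log t) atTop atTop)
    (a : ℝ) (ha : Tendsto (fun t => φ t / t) atTop (nhds a))
    (p : ℝ) (hp : 1 ≤ p)
    (lam : ℂ) (hlam : ‖lam‖ < a) :
    Integrable (fun z : ℂ =>
        ‖Complex.exp (lam * z)‖ ^ p * Real.exp (-p * φ ‖z‖)) ∧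
      ∀ z : ℂ, deriv (fun w : ℂ => Complex.exp (lam * w)) z = lam * Complex.exp (lam * z) :=
  stmt_2_general φ hφ0 hmono a ha p hp lam hlam
end

section
/- For 0 < α ≤ 1, the weights γ_n of the backward-shift representation of D on H_α, given by γ_n² = 2^{2/α}(n+1)²Γ((2/α)(n+1))/Γ((2/α)(n+2)), satisfy γ_n ~ c·n^{1-1/α} as n → ∞ for some constant c > 0; in particular γ_n → 0 when 0 < α < 1. -/
/-!
Log-convexity of `Γ` between `x` and `x + 1` gives Gautschi's inequalities
`((x + s) / x) ^ (s - 1) ≤ Γ (x + s) / (Γ x * x ^ s) ≤ 1` for `0 ≤ s ≤ 1`, hence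
`Γ (x + s) ~ Γ x * x ^ s` as `x → ∞`; the functional equation `Γ (x + 1) = x Γ x` extends this
to every `s ≥ 0`. With `β = 2 / α` and `x = β (n + 1)` it yields
`γ_n² ~ (2 / β) ^ β (n + 1) ^ (2 - β) ~ α ^ (2 / α) n ^ (2 - 2 / α)`, so `c = α ^ (1 / α)`.
-/

open Filter Topology Set

/-- The weights `γ_n` of the backward-shift representation of `D` on `H_α`. -/
noncomputable def gam (α : ℝ) (n : ℕ) : ℝ :=
  Real.sqrt ((2 : ℝ) ^ (2 / α) * ((n : ℝ) + 1) ^ 2 * Real.Gamma (2 / α * ((n : ℝ) + 1)) /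
    Real.Gamma (2 / α * ((n : ℝ) + 2)))

namespace Real

theorem Gamma_add_le_Gamma_mul_rpow {x s : ℝ} (hx : 0 < x) (hs₀ : 0 ≤ s) (hs₁ : s ≤ 1) :
    Gamma (x + s) ≤ Gamma x * x ^ s := by
  have hΓ := Gamma_pos_of_pos hx
  have hconv := convexOn_log_Gamma.2 (mem_Ioi.2 hx) (mem_Ioi.2 (by linarith : 0 < x + 1))
    (sub_nonneg.2 hs₁) hs₀ (sub_add_cancel 1 s)
  have hmid : (1 - s) * x + s * (x + 1) = x + s := by ring
  simp only [Function.comp_apply, smul_eq_mul, hmid, Gamma_add_one hx.ne',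
    log_mul hx.ne' hΓ.ne'] at hconv
  rw [← log_le_log_iff (Gamma_pos_of_pos (by linarith)) (by positivity),
    log_mul hΓ.ne' (by positivity), log_rpow hx]
  linarith

theorem rpow_le_Gamma_add_div_Gamma_mul_rpow {x s : ℝ} (hx : 0 < x) (hs₀ : 0 ≤ s)
    (hs₁ : s ≤ 1) : ((x + s) / x) ^ (s - 1) ≤ Gamma (x + s) / (Gamma x * x ^ s) := by
  have hxs : 0 < x + s := by linarith
  -- the upper bound, started at `x + s` with step `1 - s`, ends at `x + 1`
  have h := Gamma_add_le_Gamma_mul_rpow hxs (sub_nonneg.2 hs₁) (by linarith)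
  rw [add_add_sub_cancel, Gamma_add_one hx.ne'] at h
  rw [le_div_iff₀ (by have := Gamma_pos_of_pos hx; positivity)]
  calc ((x + s) / x) ^ (s - 1) * (Gamma x * x ^ s)
      = (x + s) ^ (s - 1) * (x * Gamma x) := by
        rw [div_rpow hxs.le hx.le, rpow_sub_one hx.ne']
        field_simp
    _ ≤ (x + s) ^ (s - 1) * (Gamma (x + s) * (x + s) ^ (1 - s)) := by gcongr
    _ = Gamma (x + s) := by
        rw [mul_left_comm, ← rpow_add hxs]; simp

theorem tendsto_add_div_self_rpow (a s : ℝ) :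
    Tendsto (fun x : ℝ => ((x + a) / x) ^ s) atTop (𝓝 1) := by
  have h : Tendsto (fun x : ℝ => 1 + a * x⁻¹) atTop (𝓝 1) := by
    simpa using tendsto_const_nhds.add (tendsto_inv_atTop_zero.const_mul a)
  have h' := h.rpow_const (p := s) (Or.inl one_ne_zero)
  rw [one_rpow] at h'
  refine h'.congr' ?_
  filter_upwards [eventually_ne_atTop 0] with x hx
  rw [add_div, div_self hx, div_eq_mul_inv]

theorem tendsto_Gamma_add_div_Gamma_mul_rpow_of_le_one {s : ℝ} (hs₀ : 0 ≤ s) (hs₁ : s ≤ 1) :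
    Tendsto (fun x => Gamma (x + s) / (Gamma x * x ^ s)) atTop (𝓝 1) := by
  refine tendsto_of_tendsto_of_tendsto_of_le_of_le' (tendsto_add_div_self_rpow s (s - 1))
    tendsto_const_nhds ?_ ?_
  · filter_upwards [eventually_gt_atTop 0] with x hx
    exact rpow_le_Gamma_add_div_Gamma_mul_rpow hx hs₀ hs₁
  · filter_upwards [eventually_gt_atTop 0] with x hx
    have := Gamma_pos_of_pos hx
    exact div_le_one_of_le₀ (Gamma_add_le_Gamma_mul_rpow hx hs₀ hs₁) (by positivity)

theorem tendsto_Gamma_add_div_Gamma_mul_rpow_add_one {s : ℝ}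
    (h : Tendsto (fun x => Gamma (x + s) / (Gamma x * x ^ s)) atTop (𝓝 1)) :
    Tendsto (fun x => Gamma (x + (s + 1)) / (Gamma x * x ^ (s + 1))) atTop (𝓝 1) := by
  have h' := (h.comp (tendsto_atTop_add_const_right atTop 1 tendsto_id)).mul
    (tendsto_add_div_self_rpow 1 s)
  rw [one_mul] at h'
  refine h'.congr' ?_
  filter_upwards [eventually_gt_atTop 0] with x hx
  have := Gamma_pos_of_pos hx
  simp only [Function.comp_apply, id_eq]
  rw [Gamma_add_one hx.ne', div_rpow (by linarith) hx.le, rpow_add_one hx.ne', add_right_comm,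
    ← add_assoc]
  field_simp

theorem tendsto_Gamma_add_div_Gamma_mul_rpow {s : ℝ} (hs : 0 ≤ s) :
    Tendsto (fun x => Gamma (x + s) / (Gamma x * x ^ s)) atTop (𝓝 1) := by
  suffices ∀ n : ℕ, ∀ t ∈ Icc (0 : ℝ) 1,
      Tendsto (fun x => Gamma (x + (t + n)) / (Gamma x * x ^ (t + n))) atTop (𝓝 1) by
    simpa using this ⌊s⌋₊ (s - ⌊s⌋₊)
      ⟨sub_nonneg.2 (Nat.floor_le hs), by linarith [Nat.lt_floor_add_one s]⟩
  intro n t ht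
  induction n with
  | zero => simpa using tendsto_Gamma_add_div_Gamma_mul_rpow_of_le_one ht.1 ht.2
  | succ n ih =>
    simpa only [Nat.cast_succ, ← add_assoc] using tendsto_Gamma_add_div_Gamma_mul_rpow_add_one ih

end Real

open Real

theorem tendsto_gam_sq_div_rpow {α : ℝ} (hα : 0 < α) :
    Tendsto (fun n : ℕ => gam α n ^ 2 / (n : ℝ) ^ (2 - 2 / α)) atTop (𝓝 (α ^ (2 / α))) := by
  set β := 2 / α with hβ_def
  have hβ : 0 < β := by positivity
  have hx_top : Tendsto (fun n : ℕ => β * (n + 1)) atTop atTop :=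
    (tendsto_atTop_add_const_right _ 1 tendsto_natCast_atTop_atTop).const_mul_atTop hβ
  have h := (((tendsto_Gamma_add_div_Gamma_mul_rpow hβ.le).comp hx_top).inv₀ one_ne_zero).const_mul
    (α ^ β) |>.mul ((tendsto_add_div_self_rpow 1 (2 - β)).comp tendsto_natCast_atTop_atTop)
  rw [inv_one, mul_one, mul_one] at h
  refine h.congr' ?_
  filter_upwards [eventually_ge_atTop 1] with n hn₁
  have hn : (0 : ℝ) < n := by exact_mod_cast hn₁
  have hx : 0 < β * (n + 1) := by positivity
  have := Gamma_pos_of_pos hx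
  have := Gamma_pos_of_pos (add_pos hx hβ)
  have h2 : (2 : ℝ) ^ β = α ^ β * β ^ β := by
    rw [← mul_rpow hα.le hβ.le, hβ_def, mul_div_cancel₀ _ hα.ne']
  have hsum : β * ((n : ℝ) + 2) = β * (n + 1) + β := by ring
  simp only [Function.comp_apply, gam, ← hβ_def]
  rw [sq_sqrt (by positivity), hsum, mul_rpow hβ.le (by positivity), div_rpow (by positivity) hn.le,
    rpow_sub (by positivity), h2, rpow_two]
  field_simp

theorem tendsto_gam_div_rpow {α : ℝ} (hα : 0 < α) :
    Tendsto (fun n : ℕ => gam α n / (n : ℝ) ^ (1 - 1 / α)) atTop (𝓝 (α ^ (1 / α))) := by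
  have h := (continuous_sqrt.tendsto _).comp (tendsto_gam_sq_div_rpow hα)
  rw [show √(α ^ (2 / α)) = α ^ (1 / α) by rw [sqrt_eq_rpow, ← rpow_mul hα.le]; ring_nf] at h
  refine h.congr fun n => ?_
  have hn : (0 : ℝ) ≤ n := n.cast_nonneg
  have hgam : 0 ≤ gam α n := sqrt_nonneg _
  have hexp : (2 : ℝ) - 2 / α = (1 - 1 / α) * (2 : ℕ) := by push_cast; ring
  rw [Function.comp_apply, hexp, rpow_mul_natCast hn, ← div_pow,
    sqrt_sq (div_nonneg hgam (rpow_nonneg hn _))]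

theorem stmt_6_general (α : ℝ) (h0 : 0 < α) :
    (∃ c : ℝ, 0 < c ∧
      Tendsto (fun n : ℕ => gam α n / (n : ℝ) ^ (1 - 1 / α)) atTop (nhds c)) ∧
      (α < 1 → Tendsto (fun n : ℕ => gam α n) atTop (nhds 0)) := by
  have h := tendsto_gam_div_rpow h0
  refine ⟨⟨α ^ (1 / α), by positivity, h⟩, fun hα => ?_⟩
  have hexp : 0 < 1 / α - 1 := by rw [sub_pos, lt_div_iff₀ h0, one_mul]; exact hα
  have hpow : Tendsto (fun n : ℕ => (n : ℝ) ^ (1 - 1 / α)) atTop (𝓝 0) := by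
    simpa [Function.comp_def] using (tendsto_rpow_neg_atTop hexp).comp tendsto_natCast_atTop_atTop
  have h' := h.mul hpow
  rw [mul_zero] at h'
  refine h'.congr' ?_
  filter_upwards [eventually_gt_atTop 0] with n hn
  exact div_mul_cancel₀ _ (rpow_pos_of_pos (Nat.cast_pos.2 hn) _).ne'

/-- `γ_n ~ c · n^{1-1/α}` as `n → ∞` for some constant `c > 0`;
in particular `γ_n → 0` when `0 < α < 1`. -/
theorem stmt_6 (α : ℝ) (h0 : 0 < α) (h1 : α ≤ 1) :
    (∃ c : ℝ, 0 < c ∧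
      Tendsto (fun n : ℕ => gam α n / (n : ℝ) ^ (1 - 1 / α)) atTop (nhds c)) ∧
      (α < 1 → Tendsto (fun n : ℕ => gam α n) atTop (nhds 0)) :=
  stmt_6_general α h0
end
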